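/- Let $L$ be the root lattice of type $A_{2l}$ with the symmetric bilinear form $\langle \alpha_i, \alpha_j \rangle$ given by the $A_{2l}$ Cartan matrix ($\langle \alpha_i, \alpha_i \rangle = 2$, $\langle \alpha_i, \alpha_j \rangle = -1$ if $|i-j|=1$, and $0$ otherwise), let $\nu(\alpha_i) = \alpha_{2l-i+1}$, and let $\zeta = \sqrt{-1} \in \mathbb{C}$. Define $C: L \times L \to \mathbb{C}^\times$ by $C(\alpha, \beta) = \prod_{j=0}^{3} (-\zeta^j)^{\langle \nu^j \alpha, \beta \rangle}$. Then $C(\alpha, \alpha) = 1$ for all $\alpha \in L$. -/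

import Mathlib

/-- Cartan matrix entry of type `A` (indices `1,…,2l`). -/
def cart (i j : ℕ) : ℤ :=
  if i = j then 2 else if i + 1 = j ∨ j + 1 = i then -1 else 0

/-- The simple root `α_i` as an integer coordinate vector. -/
def sroot (i : ℕ) : ℕ → ℤ := fun j => if j = i then 1 else 0

/-- The diagram involution `ν : α_i ↦ α_{2l-i+1}` on coordinate vectors. -/
def nuL (l : ℕ) (x : ℕ → ℤ) : ℕ → ℤ := fun j => x (2 * l + 1 - j)

/-- The symmetric bilinear form given by the `A_{2l}` Cartan matrix. -/
def Bform (l : ℕ) (x y : ℕ → ℤ) : ℤ :=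
  ∑ i ∈ Finset.Icc 1 (2 * l), ∑ j ∈ Finset.Icc 1 (2 * l), x i * cart i j * y j

/-- The root `α_i^{(j)} = α_i + ⋯ + α_{i+j-1}`. -/
def aroot (i j : ℕ) : ℕ → ℤ := fun m => ∑ k ∈ Finset.range j, sroot (i + k) m

/-- Membership in the root lattice `L = ⊕_{i=1}^{2l} ℤ α_i` (support condition). -/
def InL (l : ℕ) (x : ℕ → ℤ) : Prop := ∀ m, m ∉ Finset.Icc 1 (2 * l) → x m = 0

/-- The map `C(α,β) = ∏_{j=0}^{3} (-ζ^j)^{⟨ν^j α, β⟩}` with `ζ = i`. -/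
noncomputable def Cmap (l : ℕ) (a b : ℕ → ℤ) : ℂ :=
  ∏ j ∈ Finset.range 4, (-(Complex.I ^ j)) ^ (Bform l ((nuL l)^[j] a) b)

/-! The factors `j = 1` and `j = 3` of `C(α, β)` cancel, since `ν² = id` and `(-ζ) ζ³ = 1`, and
the factor `j = 2` is `1`; so `C(α, β) = (-1)^⟨α, β⟩`. For `β = α` the exponent is even because
the Cartan matrix is symmetric with even diagonal. -/

/-- Modulo `2` the terms `(i, j)` and `(j, i)` cancel in pairs. -/
theorem even_sum_sum_of_symm {ι : Type*} (s : Finset ι) (f : ι → ι → ℤ)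
    (hsymm : ∀ i j, f i j = f j i) (hdiag : ∀ i, Even (f i i)) :
    Even (∑ i ∈ s, ∑ j ∈ s, f i j) := by
  rw [← ZMod.intCast_eq_zero_iff_even, ← Finset.sum_product']
  push_cast
  refine Finset.sum_involution (fun p _ => p.swap) (fun p _ => ?_) (fun p _ hne hfix => ?_)
    (fun p hp => Finset.mem_product.2 (Finset.mem_product.1 hp).symm)
    (fun _ _ => rfl)
  · rw [Prod.fst_swap, Prod.snd_swap, hsymm p.2 p.1, ← two_mul, CharTwo.two_eq_zero (R := ZMod 2),
      zero_mul]
  · obtain ⟨i, j⟩ := p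
    obtain rfl : j = i := congrArg Prod.fst hfix
    exact absurd ((ZMod.intCast_eq_zero_iff_even).2 (hdiag j)) hne

theorem cart_symm (i j : ℕ) : cart i j = cart j i := by
  unfold cart
  by_cases h : i = j <;> simp [h, eq_comm, or_comm]

theorem even_Bform_self (l : ℕ) (a : ℕ → ℤ) : Even (Bform l a a) :=
  even_sum_sum_of_symm _ _ (fun i j => by rw [cart_symm]; ring)
    (fun i => ⟨a i * a i, by simp only [cart, if_true]; ring⟩)

theorem Bform_nuL_nuL (l : ℕ) (x y : ℕ → ℤ) :
    Bform l (nuL l (nuL l x)) y = Bform l x y := by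
  refine Finset.sum_congr rfl fun i hi => Finset.sum_congr rfl fun j _ => ?_
  have hi' : 2 * l + 1 - (2 * l + 1 - i) = i := by
    simp only [Finset.mem_Icc] at hi
    omega
  simp only [nuL, hi']

theorem Cmap_eq_neg_one_zpow (l : ℕ) (a b : ℕ → ℤ) : Cmap l a b = (-1) ^ Bform l a b := by
  have hζ₂ : -Complex.I ^ 2 = 1 := by linear_combination -Complex.I_sq
  have hζ₁₃ : -Complex.I ^ 1 * -Complex.I ^ 3 = 1 := by
    linear_combination (Complex.I ^ 2 - 1) * Complex.I_sq
  rw [Cmap, Finset.prod_range_succ, Finset.prod_range_succ, Finset.prod_range_succ,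
    Finset.prod_range_one]
  simp only [Function.iterate_succ_apply', Function.iterate_zero_apply, Bform_nuL_nuL]
  rw [hζ₂, one_zpow, mul_one, mul_assoc, ← mul_zpow, hζ₁₃, one_zpow, mul_one, pow_zero]

theorem Cmap_self_general (l : ℕ) (a : ℕ → ℤ) :
    Cmap l a a = 1 := by
  rw [Cmap_eq_neg_one_zpow, (even_Bform_self l a).neg_one_zpow]

/-- `C(α,α) = 1` for all `α ∈ L`. -/
theorem Cmap_self (l : ℕ) (hl : 1 ≤ l) (a : ℕ → ℤ) (ha : InL l a) :
    Cmap l a a = 1 :=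
  Cmap_self_general l a
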